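/- arXiv:2502.19006 — 5 statements merged into one kernel-verified Lean document; each statement's English description precedes it below -/
import Mathlib

section
/- Elliptical potential count lemma: for every λ > 0, every T ∈ ℕ₊ and every sequence x₁, …, x_T ∈ X, the set 𝒯 = {t ∈ {1, …, T} : λ⁻¹ σ_{λ²}(x_t; X_{t−1}) > 1} (where X_{t−1} = (x₁, …, x_{t−1})) satisfies |𝒯| ≤ (3/2) ln det(I_T + λ⁻² K_T); in particular |𝒯| ≤ 3 γ_T(λ²). -/
open Matrix

noncomputable section

/-- Gram matrix `K = [k(x_i, x_j)]` of the kernel `k` on the finite family `xs`. -/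
def gram {X ι : Type*} [Fintype ι] (k : X → X → ℝ) (xs : ι → X) :
    Matrix ι ι ℝ := fun i j => k (xs i) (xs j)

/-- Kernel vector `k_t(x) = (k(x₁, x), …, k(x_t, x))`. -/
def kvec {X ι : Type*} [Fintype ι] (k : X → X → ℝ) (xs : ι → X) (x : X) :
    ι → ℝ := fun i => k (xs i) x

/-- Regularized posterior variance `σ²_{λ²}(x; xs) = k(x,x) - k_t(x)ᵀ (K + λ² I)⁻¹ k_t(x)`.
For the empty family this is `k(x,x)`. -/
def postVar {X ι : Type*} [Fintype ι] [DecidableEq ι] (k : X → X → ℝ)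
    (xs : ι → X) (lam : ℝ) (x : X) : ℝ :=
  k x x - kvec k xs x ⬝ᵥ ((gram k xs + lam ^ 2 • (1 : Matrix ι ι ℝ))⁻¹ *ᵥ kvec k xs x)

/-- Noise-free posterior standard deviation `σ(x; xs) = inf_{λ > 0} σ_{λ²}(x; xs)`. -/
def postStd {X ι : Type*} [Fintype ι] [DecidableEq ι] (k : X → X → ℝ)
    (xs : ι → X) (x : X) : ℝ :=
  ⨅ lam : {l : ℝ // 0 < l}, Real.sqrt (postVar k xs lam.1 x)

/-- Maximum information gain `γ_T(λ²) = sup_{x₁,…,x_T} (1/2) ln det (I_T + λ⁻² K_T)`,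
a value in `[0, ∞]`. -/
def mig {X : Type*} (k : X → X → ℝ) (T : ℕ) (lam : ℝ) : ENNReal :=
  ⨆ xs : Fin T → X, ENNReal.ofReal
    ((1 / 2) * Real.log ((1 + (lam ^ 2)⁻¹ • gram k xs).det))

/-- The prefix `X_{t-1} = (x₁, …, x_{t-1})` of a finite sequence (`t` is 0-indexed). -/
def pre {X : Type*} {T : ℕ} (xs : Fin T → X) (t : Fin T) : Fin t.1 → X :=
  fun i => xs ⟨i.1, i.2.trans t.2⟩

/-- Noise-free posterior mean `μ(x; xs) = k_t(x)ᵀ K⁻¹ (f(x₁), …, f(x_t))ᵀ`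
(for the empty family this is `0`). -/
def postMean {X ι : Type*} [Fintype ι] [DecidableEq ι] (k : X → X → ℝ)
    (xs : ι → X) (f : X → ℝ) (x : X) : ℝ :=
  kvec k xs x ⬝ᵥ ((gram k xs)⁻¹ *ᵥ fun i => f (xs i))

/-- Noise-free posterior standard deviation in closed form,
`σ(x; xs) = (k(x,x) - k_t(x)ᵀ K⁻¹ k_t(x))^{1/2}` (for the empty family, `k(x,x)^{1/2}`). -/
def postStdInv {X ι : Type*} [Fintype ι] [DecidableEq ι] (k : X → X → ℝ)
    (xs : ι → X) (x : X) : ℝ :=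
  Real.sqrt (k x x - kvec k xs x ⬝ᵥ ((gram k xs)⁻¹ *ᵥ kvec k xs x))

/-- The first `t` points `X_t = (x₁, …, x_t)` of an infinite sequence. -/
def prefN {X : Type*} (xseq : ℕ → X) (t : ℕ) : Fin t → X := fun i => xseq i

/-!
Bordering the Gram matrix by one more point and taking the Schur complement of the regularized
block gives `det (K_{t+1} + λ² I) = det (K_t + λ² I) * (λ² + σ²_{λ²}(x_{t+1}; X_t))`, hence
`det (I + λ⁻² K_T) = ∏_t (1 + λ⁻² σ²_{λ²}(x_t; X_{t-1}))`. The Schur complement of a positive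
semidefinite bordered matrix is nonnegative, so every factor is at least `1`, while for `t ∈ 𝒯`
the factor exceeds `2`. Therefore `|𝒯| ln 2 ≤ ln det (I + λ⁻² K_T)`, and `ln 2 > 2/3`.
-/

open Finset

section

variable {X ι : Type*} [Fintype ι]

lemma gram_comp {κ : Type*} [Fintype κ] (k : X → X → ℝ) (xs : ι → X) (e : κ → ι) :
    gram k (xs ∘ e) = (gram k xs).submatrix e e := rfl

lemma submatrix_gram_add_smul_one {κ : Type*} [Fintype κ] [DecidableEq ι] [DecidableEq κ]
    (k : X → X → ℝ) (xs : ι → X) (r : ℝ) (e : κ ≃ ι) :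
    (gram k xs + r • 1).submatrix e e = gram k (xs ∘ e) + r • 1 := by
  rw [gram_comp, ← submatrix_one_equiv e]
  rfl

lemma comp_finSumFinEquiv_eq_sumElim {n : ℕ} (xs : Fin (n + 1) → X) :
    xs ∘ finSumFinEquiv = Sum.elim (Fin.init xs) fun _ : Fin 1 => xs (Fin.last n) := by
  ext (i | i)
  · rfl
  · rw [Subsingleton.elim i 0]
    rfl

lemma conjTranspose_replicateCol_mul_mul_replicateCol_apply {κ : Type*} (A : Matrix ι ι ℝ)
    (v : ι → ℝ) (i j : κ) :
    ((replicateCol κ v)ᴴ * A * replicateCol κ v) i j = v ⬝ᵥ (A *ᵥ v) := by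
  rw [Matrix.mul_assoc, ← replicateCol_mulVec, conjTranspose_replicateCol, star_trivial,
    replicateRow_mul_replicateCol_apply]

lemma schur_complement_apply_eq_add_postVar [DecidableEq ι] (k : X → X → ℝ) (xs : ι → X) (x : X)
    (lam : ℝ) (D : Matrix (Fin 1) (Fin 1) ℝ) (i j : Fin 1) :
    (gram k (fun _ : Fin 1 => x) + D - (replicateCol (Fin 1) (kvec k xs x))ᴴ *
        (gram k xs + lam ^ 2 • 1)⁻¹ * replicateCol (Fin 1) (kvec k xs x)) i j =
      D i j + postVar k xs lam x := by
  rw [Matrix.sub_apply, conjTranspose_replicateCol_mul_mul_replicateCol_apply, postVar,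
    Matrix.add_apply, _root_.gram]
  ring

lemma ncard_one_lt_mul_log_two_le_sum_log {a : ι → ℝ} (ha : ∀ i, 0 ≤ a i) :
    ({i | 1 < a i}.ncard : ℝ) * Real.log 2 ≤ ∑ i, Real.log (1 + a i) := by
  calc ({i | 1 < a i}.ncard : ℝ) * Real.log 2
      = ∑ i ∈ univ.filter (fun i => 1 < a i), Real.log 2 := by
        rw [sum_const, nsmul_eq_mul, ← Set.ncard_coe_finset, coe_filter]
        simp
    _ ≤ ∑ i ∈ univ.filter (fun i => 1 < a i), Real.log (1 + a i) :=
        sum_le_sum fun i hi =>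
          Real.log_le_log two_pos (by linarith [(mem_filter.mp hi).2])
    _ ≤ ∑ i, Real.log (1 + a i) :=
        sum_le_sum_of_subset_of_nonneg (filter_subset _ _) fun i _ _ =>
          Real.log_nonneg (by linarith [ha i])

lemma one_lt_inv_mul_sqrt_iff {lam : ℝ} (hlam : 0 < lam) (v : ℝ) :
    1 < lam⁻¹ * Real.sqrt v ↔ 1 < v / lam ^ 2 := by
  rw [← div_eq_inv_mul, one_lt_div hlam, one_lt_div (by positivity), Real.lt_sqrt hlam.le]

structure IsPosSemidefKernel (k : X → X → ℝ) : Prop where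
  symm : ∀ x y, k x y = k y x
  sum_sum_mul_mul_nonneg : ∀ (n : ℕ) (xv : Fin n → X) (c : Fin n → ℝ),
    0 ≤ ∑ i, ∑ j, c i * c j * k (xv i) (xv j)

namespace IsPosSemidefKernel

variable {k : X → X → ℝ} {lam : ℝ}

lemma gram_posSemidef (hk : IsPosSemidefKernel k) (xs : ι → X) : (gram k xs).PosSemidef := by
  let e := Fintype.equivFin ι
  have hfin : (gram k (xs ∘ e.symm)).PosSemidef := by
    refine .of_dotProduct_mulVec_nonneg (funext₂ fun i j => hk.symm _ _) fun c => ?_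
    refine (hk.sum_sum_mul_mul_nonneg _ (xs ∘ e.symm) c).trans_eq ?_
    simp only [dotProduct, mulVec, Pi.star_apply, star_trivial, _root_.gram, Function.comp_apply,
      mul_sum]
    exact sum_congr rfl fun i _ => sum_congr rfl fun j _ => by ring
  have := hfin.submatrix e
  rwa [← gram_comp, Function.comp_assoc, e.symm_comp_self, Function.comp_id] at this

lemma posDef_gram_add_smul_one [DecidableEq ι] (hk : IsPosSemidefKernel k)
    (hlam : lam ≠ 0) (xs : ι → X) : (gram k xs + lam ^ 2 • (1 : Matrix ι ι ℝ)).PosDef :=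
  PosDef.posSemidef_add (hk.gram_posSemidef xs) (PosDef.one.smul (by positivity))

lemma gram_sumElim_add_fromBlocks (hk : IsPosSemidefKernel k) (xs : ι → X) (x : X)
    (A : Matrix ι ι ℝ) (D : Matrix (Fin 1) (Fin 1) ℝ) :
    gram k (Sum.elim xs fun _ : Fin 1 => x) + fromBlocks A 0 0 D =
      fromBlocks (gram k xs + A) (replicateCol (Fin 1) (kvec k xs x))
        (replicateCol (Fin 1) (kvec k xs x))ᴴ (gram k (fun _ : Fin 1 => x) + D) := by
  ext (i | i) (j | j) <;> simp [_root_.gram, kvec, hk.symm x]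

lemma postVar_nonneg [DecidableEq ι] (hk : IsPosSemidefKernel k) (hlam : lam ≠ 0) (xs : ι → X)
    (x : X) : 0 ≤ postVar k xs lam x := by
  have hA := hk.posDef_gram_add_smul_one hlam xs
  have := hA.isUnit.invertible
  have hblock :
      (fromBlocks (lam ^ 2 • 1 : Matrix ι ι ℝ) 0 0 (0 : Matrix (Fin 1) (Fin 1) ℝ)).PosSemidef := by
    rw [smul_one_eq_diagonal, ← diagonal_zero, fromBlocks_diagonal, posSemidef_diagonal_iff]
    rintro (i | i) <;> simp [sq_nonneg]
  have hM := (hk.gram_posSemidef (Sum.elim xs fun _ : Fin 1 => x)).add hblock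
  rw [hk.gram_sumElim_add_fromBlocks, PosDef.fromBlocks₁₁ _ _ hA] at hM
  have h00 := hM.diag_nonneg (i := 0)
  rwa [schur_complement_apply_eq_add_postVar, Matrix.zero_apply, zero_add] at h00

lemma det_gram_sumElim_add_smul_one [DecidableEq ι] (hk : IsPosSemidefKernel k) (hlam : lam ≠ 0)
    (xs : ι → X) (x : X) :
    (gram k (Sum.elim xs fun _ : Fin 1 => x) + lam ^ 2 • 1).det =
      (gram k xs + lam ^ 2 • 1).det * (lam ^ 2 + postVar k xs lam x) := by
  have := (hk.posDef_gram_add_smul_one hlam xs).isUnit.invertible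
  rw [← fromBlocks_one, fromBlocks_smul, smul_zero, smul_zero, hk.gram_sumElim_add_fromBlocks,
    det_fromBlocks₁₁, det_fin_one, invOf_eq_nonsing_inv, schur_complement_apply_eq_add_postVar]
  simp

lemma det_gram_add_smul_one_eq_prod (hk : IsPosSemidefKernel k) (hlam : lam ≠ 0) :
    ∀ {n : ℕ} (xs : Fin n → X),
      (gram k xs + lam ^ 2 • 1).det = ∏ t, (lam ^ 2 + postVar k (pre xs t) lam (xs t))
  | 0, _ => by simp
  | n + 1, xs => by
    rw [← det_submatrix_equiv_self finSumFinEquiv, submatrix_gram_add_smul_one,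
      comp_finSumFinEquiv_eq_sumElim, hk.det_gram_sumElim_add_smul_one hlam,
      hk.det_gram_add_smul_one_eq_prod hlam (Fin.init xs), Fin.prod_univ_castSucc]
    rfl

lemma det_one_add_inv_smul_gram_eq_prod (hk : IsPosSemidefKernel k) (hlam : lam ≠ 0) {n : ℕ}
    (xs : Fin n → X) :
    (1 + (lam ^ 2)⁻¹ • gram k xs).det = ∏ t, (1 + postVar k (pre xs t) lam (xs t) / lam ^ 2) := by
  have hlam2 : lam ^ 2 ≠ 0 := pow_ne_zero 2 hlam
  have hscale : 1 + (lam ^ 2)⁻¹ • gram k xs = (lam ^ 2)⁻¹ • (gram k xs + lam ^ 2 • 1) := by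
    rw [smul_add, smul_smul, inv_mul_cancel₀ hlam2, one_smul, add_comm]
  rw [hscale, det_smul, hk.det_gram_add_smul_one_eq_prod hlam, Fintype.card_fin,
    ← Fin.prod_const n (lam ^ 2)⁻¹, ← prod_mul_distrib]
  refine prod_congr rfl fun t _ => ?_
  field_simp

lemma log_det_one_add_inv_smul_gram (hk : IsPosSemidefKernel k) (hlam : lam ≠ 0) {n : ℕ}
    (xs : Fin n → X) :
    Real.log (1 + (lam ^ 2)⁻¹ • gram k xs).det =
      ∑ t, Real.log (1 + postVar k (pre xs t) lam (xs t) / lam ^ 2) := by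
  rw [hk.det_one_add_inv_smul_gram_eq_prod hlam, Real.log_prod]
  intro t _
  have := div_nonneg (hk.postVar_nonneg hlam (pre xs t) (xs t)) (sq_nonneg lam)
  positivity

end IsPosSemidefKernel

end

theorem elliptical_potential_count_general
    {X : Type*} (k : X → X → ℝ)
    (hsym : ∀ x y : X, k x y = k y x)
    (hpsd : ∀ (n : ℕ) (xv : Fin n → X) (c : Fin n → ℝ),
      0 ≤ ∑ i, ∑ j, c i * c j * k (xv i) (xv j))
    (lam : ℝ) (hlam : 0 < lam) (T : ℕ) (xs : Fin T → X) :
    (({t : Fin T | 1 < lam⁻¹ * Real.sqrt (postVar k (pre xs t) lam (xs t))} :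
          Set (Fin T)).ncard : ℝ) ≤
        (3 / 2) * Real.log ((1 + (lam ^ 2)⁻¹ • gram k xs).det) ∧
      (({t : Fin T | 1 < lam⁻¹ * Real.sqrt (postVar k (pre xs t) lam (xs t))} :
          Set (Fin T)).ncard : ENNReal) ≤ 3 * mig k T lam := by
  have hk : IsPosSemidefKernel k := ⟨hsym, hpsd⟩
  set L := Real.log ((1 + (lam ^ 2)⁻¹ • gram k xs).det)
  set N := ({t : Fin T | 1 < lam⁻¹ * Real.sqrt (postVar k (pre xs t) lam (xs t))} :
    Set (Fin T)).ncard
  have hcount : (N : ℝ) * Real.log 2 ≤ L := by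
    simp_rw [N, L, one_lt_inv_mul_sqrt_iff hlam, hk.log_det_one_add_inv_smul_gram hlam.ne']
    exact ncard_one_lt_mul_log_two_le_sum_log fun t =>
      div_nonneg (hk.postVar_nonneg hlam.ne' _ _) (sq_nonneg lam)
  have hreal : (N : ℝ) ≤ 3 / 2 * L := by
    have hlog_two : (2 / 3 : ℝ) ≤ Real.log 2 := by linarith [Real.log_two_gt_d9]
    nlinarith [N.cast_nonneg (α := ℝ)]
  refine ⟨hreal, ?_⟩
  calc (N : ENNReal) = ENNReal.ofReal N := (ENNReal.ofReal_natCast N).symm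
    _ ≤ ENNReal.ofReal (3 * (1 / 2 * L)) := ENNReal.ofReal_le_ofReal (by linarith)
    _ = 3 * ENNReal.ofReal (1 / 2 * L) := by rw [ENNReal.ofReal_mul zero_le_three]; norm_num
    _ ≤ 3 * mig k T lam := by
      gcongr
      exact le_iSup_of_le xs le_rfl

/-- Elliptical potential count lemma. -/
theorem elliptical_potential_count
    {X : Type*} [Nonempty X] (k : X → X → ℝ)
    (hsym : ∀ x y : X, k x y = k y x)
    (hpsd : ∀ (n : ℕ) (xv : Fin n → X) (c : Fin n → ℝ),
      0 ≤ ∑ i, ∑ j, c i * c j * k (xv i) (xv j))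
    (lam : ℝ) (hlam : 0 < lam) (T : ℕ) (hT : 0 < T) (xs : Fin T → X) :
    (({t : Fin T | 1 < lam⁻¹ * Real.sqrt (postVar k (pre xs t) lam (xs t))} :
          Set (Fin T)).ncard : ℝ) ≤
        (3 / 2) * Real.log ((1 + (lam ^ 2)⁻¹ • gram k xs).det) ∧
      (({t : Fin T | 1 < lam⁻¹ * Real.sqrt (postVar k (pre xs t) lam (xs t))} :
          Set (Fin T)).ncard : ENNReal) ≤ 3 * mig k T lam :=
  elliptical_potential_count_general k hsym hpsd lam hlam T xs
end
end

section
/- Monotonicity of the posterior variance in the regularization parameter: for every finite sequence X_t = (x₁, …, x_t) in X, every x ∈ X and all reals 0 < λ₁ ≤ λ₂, one has 0 ≤ σ²_{λ₁²}(x; X_t) ≤ σ²_{λ₂²}(x; X_t) ≤ k(x, x); consequently σ²(x; X_t) ≤ σ²_{λ²}(x; X_t) for every λ > 0. Moreover, if the Gram matrix K_t is invertible, then σ²(x; X_t) = inf_{λ>0} σ²_{λ²}(x; X_t) = k(x, x) − k_t(x)ᵀ K_t⁻¹ k_t(x). -/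
open Matrix

noncomputable section

/-!
With `A_a = K + a • 1`, the identity `A_a⁻¹ - A_b⁻¹ = (b - a) A_a⁻¹ A_b⁻¹` gives
`0 ≤ vᵀ A_a⁻¹ v - vᵀ A_b⁻¹ v ≤ (b - a) ‖A_a⁻¹ v‖²` for `0 ≤ a ≤ b` and `A_a` positive
definite. Hence `σ²_{λ²}` is nondecreasing in `λ > 0` and, when `K` is invertible, tends as
`λ → 0` to its value at `λ = 0`, which is the closed form `k(x,x) - vᵀ K⁻¹ v`. The bounds
`0 ≤ σ²_{λ²} ≤ k(x,x)` come from testing the Gram matrix of `(x₁, …, x_t, x)` against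
`(-(K + λ² • 1)⁻¹ v, 1)`, and from `(K + λ² • 1)⁻¹ ⪰ 0`. Since `√` is monotone and
continuous, `(⨅ σ_{λ²})² = ⨅ σ²_{λ²}`.
-/

open Filter Topology

lemma sq_ciInf_sqrt {ι : Sort*} [Nonempty ι] {f : ι → ℝ} (hf : ∀ i, 0 ≤ f i) :
    (⨅ i, √(f i)) ^ 2 = ⨅ i, f i := by
  have hbdd : BddBelow (Set.range f) := ⟨0, Set.forall_mem_range.2 hf⟩
  rw [← Real.sqrt_monotone.map_ciInf_of_continuousAt Real.continuous_sqrt.continuousAt hbdd,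
    Real.sq_sqrt (le_ciInf hf)]

lemma sInf_setOf_pos_eq {f : ℝ → ℝ} (hle : ∀ l, 0 < l → f 0 ≤ f l)
    (hf : ContinuousWithinAt f (Set.Ioi 0) 0) : sInf {v | ∃ l, 0 < l ∧ v = f l} = f 0 := by
  refine IsGLB.csInf_eq ⟨?_, fun w hw => ?_⟩ ⟨f 1, 1, one_pos, rfl⟩
  · rintro _ ⟨l, hl, rfl⟩
    exact hle l hl
  · exact ge_of_tendsto hf (eventually_nhdsWithin_of_forall fun l hl => hw ⟨l, hl, rfl⟩)

section ShiftedInverse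

variable {ι : Type*} [Fintype ι] [DecidableEq ι]

lemma mulVec_nonsing_inv_mulVec {A : Matrix ι ι ℝ} (hA : IsUnit A.det) (v : ι → ℝ) :
    A *ᵥ (A⁻¹ *ᵥ v) = v := by
  rw [mulVec_mulVec, mul_nonsing_inv A hA, one_mulVec]

lemma dotProduct_add_smul_one_mulVec (K : Matrix ι ι ℝ) (a : ℝ) (w : ι → ℝ) :
    w ⬝ᵥ ((K + a • 1) *ᵥ w) = w ⬝ᵥ (K *ᵥ w) + a * (w ⬝ᵥ w) := by
  simp only [add_mulVec, smul_mulVec, one_mulVec, dotProduct_add, dotProduct_smul, smul_eq_mul]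

lemma dotProduct_inv_mulVec_le {K A : Matrix ι ι ℝ} {v : ι → ℝ} {c : ℝ}
    (hKA : ∀ w, w ⬝ᵥ (K *ᵥ w) ≤ w ⬝ᵥ (A *ᵥ w))
    (h : ∀ w, 0 ≤ w ⬝ᵥ (K *ᵥ w) + 2 * (w ⬝ᵥ v) + c) :
    v ⬝ᵥ (A⁻¹ *ᵥ v) ≤ c := by
  by_cases hA : IsUnit A.det
  -- test the form at `-A⁻¹ v`; for singular `A`, the junk value `A⁻¹ = 0` leaves `0 ≤ c`
  · set w := A⁻¹ *ᵥ v
    have hle := hKA w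
    have hform := h (-w)
    rw [mulVec_nonsing_inv_mulVec hA] at hle
    simp only [mulVec_neg, neg_dotProduct, dotProduct_neg, neg_neg] at hform
    rw [dotProduct_comm]
    linarith
  · simpa [nonsing_inv_apply_not_isUnit A hA] using h 0

lemma dotProduct_inv_sub_inv_add_smul_one_mem_Icc {A : Matrix ι ι ℝ} (hA : A.PosDef)
    {d : ℝ} (hd : 0 ≤ d) (v : ι → ℝ) :
    v ⬝ᵥ (A⁻¹ *ᵥ v) - v ⬝ᵥ ((A + d • 1)⁻¹ *ᵥ v) ∈
      Set.Icc 0 (d * ((A⁻¹ *ᵥ v) ⬝ᵥ (A⁻¹ *ᵥ v))) := by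
  have hAdet : IsUnit A.det := (isUnit_iff_isUnit_det A).1 hA.isUnit
  have hBdet : IsUnit (A + d • 1).det :=
    (isUnit_iff_isUnit_det _).1 (hA.add_posSemidef (PosSemidef.one.smul hd)).isUnit
  have hAinv : A⁻¹.IsSymm := by simpa [conjTranspose_eq_transpose_of_trivial] using hA.inv.1
  set w := A⁻¹ *ᵥ v
  set u := (A + d • 1)⁻¹ *ᵥ v
  set z := A⁻¹ *ᵥ u
  have hwu : w - u = d • z := by
    have hAu : A *ᵥ u + d • u = v := by
      rw [← mulVec_nonsing_inv_mulVec hBdet v, add_mulVec, smul_mulVec, one_mulVec]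
    calc w - u = A⁻¹ *ᵥ (A *ᵥ u + d • u) - u := by rw [hAu]
      _ = d • z := by
        rw [mulVec_add, mulVec_smul, mulVec_mulVec, nonsing_inv_mul A hAdet, one_mulVec,
          add_sub_cancel_left]
  have hdiff : v ⬝ᵥ w - v ⬝ᵥ u = d * (w ⬝ᵥ u) := by
    rw [← dotProduct_sub, hwu, dotProduct_smul, smul_eq_mul, dotProduct_mulVec,
      ← mulVec_transpose, hAinv.eq]
  have huz : 0 ≤ u ⬝ᵥ z := by simpa using hA.inv.posSemidef.dotProduct_mulVec_nonneg u
  have huu : 0 ≤ u ⬝ᵥ u := by simpa using dotProduct_star_self_nonneg u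
  have hzz : 0 ≤ z ⬝ᵥ z := by simpa using dotProduct_star_self_nonneg z
  rw [hdiff, eq_add_of_sub_eq' hwu]
  simp only [add_dotProduct, dotProduct_add, smul_dotProduct, dotProduct_smul, smul_eq_mul,
    dotProduct_comm z u]
  constructor <;> nlinarith [mul_nonneg hd huz, mul_nonneg (mul_nonneg hd hd) hzz]

end ShiftedInverse

section Kernel

variable {X : Type*} {k : X → X → ℝ}

lemma dotProduct_gram_mulVec {ι : Type*} [Fintype ι] (k : X → X → ℝ) (xs : ι → X)
    (c : ι → ℝ) : c ⬝ᵥ (gram k xs *ᵥ c) = ∑ i, ∑ j, c i * c j * k (xs i) (xs j) := by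
  simp only [dotProduct, mulVec, _root_.gram, Finset.mul_sum]
  exact Finset.sum_congr rfl fun i _ => Finset.sum_congr rfl fun j _ => by ring

lemma gram_posSemidef (hsym : ∀ x y : X, k x y = k y x)
    (hpsd : ∀ (n : ℕ) (xv : Fin n → X) (c : Fin n → ℝ),
      0 ≤ ∑ i, ∑ j, c i * c j * k (xv i) (xv j))
    {n : ℕ} (xs : Fin n → X) : (gram k xs).PosSemidef := by
  refine PosSemidef.of_dotProduct_mulVec_nonneg ?_ fun c => ?_
  · ext i j
    exact hsym (xs j) (xs i)
  · rw [star_trivial, dotProduct_gram_mulVec]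
    exact hpsd n xs c

-- The Gram matrix of `(x₁, …, x_n, x)`, tested against `(c, 1)`.
lemma dotProduct_gram_mulVec_add_kvec_nonneg (hsym : ∀ x y : X, k x y = k y x)
    (hpsd : ∀ (n : ℕ) (xv : Fin n → X) (c : Fin n → ℝ),
      0 ≤ ∑ i, ∑ j, c i * c j * k (xv i) (xv j))
    {n : ℕ} (xs : Fin n → X) (x : X) (c : Fin n → ℝ) :
    0 ≤ c ⬝ᵥ (gram k xs *ᵥ c) + 2 * (c ⬝ᵥ kvec k xs x) + k x x := by
  have h := hpsd (n + 1) (Fin.snoc xs x) (Fin.snoc c 1)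
  simp only [Fin.sum_univ_castSucc, Fin.snoc_castSucc, Fin.snoc_last, one_mul, mul_one,
    Finset.sum_add_distrib] at h
  have hkvec : ∑ j, c j * k x (xs j) = c ⬝ᵥ kvec k xs x :=
    Finset.sum_congr rfl fun j _ => by rw [hsym]; rfl
  rw [hkvec, show ∑ j, c j * k (xs j) x = c ⬝ᵥ kvec k xs x from rfl,
    ← dotProduct_gram_mulVec] at h
  linarith

end Kernel

section PosteriorVariance

variable {X : Type*} {k : X → X → ℝ} {t : ℕ}

lemma postVar_nonneg (hsym : ∀ x y : X, k x y = k y x)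
    (hpsd : ∀ (n : ℕ) (xv : Fin n → X) (c : Fin n → ℝ),
      0 ≤ ∑ i, ∑ j, c i * c j * k (xv i) (xv j))
    (xs : Fin t → X) (lam : ℝ) (x : X) : 0 ≤ postVar k xs lam x := by
  refine sub_nonneg.2 (dotProduct_inv_mulVec_le (fun w => ?_)
    (dotProduct_gram_mulVec_add_kvec_nonneg hsym hpsd xs x))
  rw [dotProduct_add_smul_one_mulVec]
  exact le_add_of_nonneg_right
    (mul_nonneg (sq_nonneg lam) (by simpa using dotProduct_star_self_nonneg w))

lemma postVar_le (hsym : ∀ x y : X, k x y = k y x)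
    (hpsd : ∀ (n : ℕ) (xv : Fin n → X) (c : Fin n → ℝ),
      0 ≤ ∑ i, ∑ j, c i * c j * k (xv i) (xv j))
    (xs : Fin t → X) (lam : ℝ) (x : X) : postVar k xs lam x ≤ k x x := by
  refine sub_le_self _ ?_
  simpa using ((gram_posSemidef hsym hpsd xs).add
    (PosSemidef.one.smul (sq_nonneg lam))).inv.dotProduct_mulVec_nonneg (kvec k xs x)

lemma postVar_sub_postVar_mem_Icc {xs : Fin t → X} {lam₀ : ℝ}
    (hK : (gram k xs + lam₀ ^ 2 • 1).PosDef) {lam : ℝ} (h : lam₀ ^ 2 ≤ lam ^ 2) (x : X) :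
    postVar k xs lam x - postVar k xs lam₀ x ∈ Set.Icc 0 ((lam ^ 2 - lam₀ ^ 2) *
      (((gram k xs + lam₀ ^ 2 • 1)⁻¹ *ᵥ kvec k xs x) ⬝ᵥ
        ((gram k xs + lam₀ ^ 2 • 1)⁻¹ *ᵥ kvec k xs x))) := by
  have := dotProduct_inv_sub_inv_add_smul_one_mem_Icc hK (sub_nonneg.2 h) (kvec k xs x)
  rw [add_assoc, ← add_smul, add_sub_cancel] at this
  rwa [postVar, postVar, sub_sub_sub_cancel_left]

lemma postVar_le_postVar {xs : Fin t → X} {lam₀ lam : ℝ}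
    (hK : (gram k xs + lam₀ ^ 2 • 1).PosDef) (h : lam₀ ^ 2 ≤ lam ^ 2) (x : X) :
    postVar k xs lam₀ x ≤ postVar k xs lam x :=
  sub_nonneg.1 (postVar_sub_postVar_mem_Icc hK h x).1

lemma postVar_monotoneOn {xs : Fin t → X} (hK : (gram k xs).PosSemidef) (x : X) :
    MonotoneOn (fun lam => postVar k xs lam x) (Set.Ioi 0) := fun _ h₁ _ _ h₁₂ =>
  postVar_le_postVar (PosDef.posSemidef_add hK (PosDef.one.smul (pow_pos h₁ 2)))
    (pow_le_pow_left₀ h₁.le h₁₂ 2) x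

lemma continuousAt_postVar_zero {xs : Fin t → X} (hK : (gram k xs).PosDef) (x : X) :
    ContinuousAt (fun lam => postVar k xs lam x) 0 := by
  have hK₀ : (gram k xs + (0 : ℝ) ^ 2 • 1).PosDef := by simpa using hK
  have hbounds (lam : ℝ) := postVar_sub_postVar_mem_Icc hK₀ (by simpa using sq_nonneg lam) x
  set C := ((gram k xs + (0 : ℝ) ^ 2 • 1)⁻¹ *ᵥ kvec k xs x) ⬝ᵥ
    ((gram k xs + (0 : ℝ) ^ 2 • 1)⁻¹ *ᵥ kvec k xs x)
  have hupper : Tendsto (fun lam : ℝ => postVar k xs 0 x + (lam ^ 2 - 0 ^ 2) * C) (𝓝 0)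
      (𝓝 (postVar k xs 0 x)) := by
    have hcont : Continuous fun lam : ℝ => postVar k xs 0 x + (lam ^ 2 - 0 ^ 2) * C := by
      fun_prop
    simpa using hcont.tendsto 0
  exact tendsto_of_tendsto_of_tendsto_of_le_of_le tendsto_const_nhds hupper
    (fun lam => by linarith [(hbounds lam).1]) (fun lam => by linarith [(hbounds lam).2])

lemma postStd_sq (hsym : ∀ x y : X, k x y = k y x)
    (hpsd : ∀ (n : ℕ) (xv : Fin n → X) (c : Fin n → ℝ),
      0 ≤ ∑ i, ∑ j, c i * c j * k (xv i) (xv j))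
    (xs : Fin t → X) (x : X) :
    postStd k xs x ^ 2 = sInf {v : ℝ | ∃ lam : ℝ, 0 < lam ∧ v = postVar k xs lam x} := by
  have : Nonempty {l : ℝ // 0 < l} := ⟨⟨1, one_pos⟩⟩
  rw [postStd, sq_ciInf_sqrt (f := fun lam : {l : ℝ // 0 < l} => postVar k xs lam.1 x)
    fun lam => postVar_nonneg hsym hpsd xs lam.1 x]
  exact congrArg sInf <| Set.ext fun v =>
    ⟨fun ⟨lam, hv⟩ => ⟨lam.1, lam.2, hv.symm⟩, fun ⟨lam, hlam, hv⟩ => ⟨⟨lam, hlam⟩, hv.symm⟩⟩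

end PosteriorVariance

theorem postVar_monotone_in_lambda_general
    {X : Type*} (k : X → X → ℝ)
    (hsym : ∀ x y : X, k x y = k y x)
    (hpsd : ∀ (n : ℕ) (xv : Fin n → X) (c : Fin n → ℝ),
      0 ≤ ∑ i, ∑ j, c i * c j * k (xv i) (xv j))
    (t : ℕ) (xs : Fin t → X) (x : X) :
    (∀ l₁ l₂ : ℝ, 0 < l₁ → l₁ ≤ l₂ →
        0 ≤ postVar k xs l₁ x ∧ postVar k xs l₁ x ≤ postVar k xs l₂ x ∧
          postVar k xs l₂ x ≤ k x x) ∧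
      (∀ lam : ℝ, 0 < lam → postStd k xs x ^ 2 ≤ postVar k xs lam x) ∧
      (IsUnit (gram k xs).det →
        postStd k xs x ^ 2 =
            sInf {v : ℝ | ∃ lam : ℝ, 0 < lam ∧ v = postVar k xs lam x} ∧
          postStd k xs x ^ 2 =
            k x x - kvec k xs x ⬝ᵥ ((gram k xs)⁻¹ *ᵥ kvec k xs x)) := by
  have hK := gram_posSemidef hsym hpsd xs
  have hstd := postStd_sq hsym hpsd xs x
  refine ⟨fun l₁ l₂ h₁ h₁₂ => ⟨postVar_nonneg hsym hpsd xs l₁ x,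
      postVar_monotoneOn hK x h₁ (h₁.trans_le h₁₂) h₁₂,
      postVar_le hsym hpsd xs l₂ x⟩,
    fun lam hlam => hstd ▸ csInf_le ?_ ⟨lam, hlam, rfl⟩, fun hdet => ⟨hstd, ?_⟩⟩
  · exact ⟨0, by rintro _ ⟨l, -, rfl⟩; exact postVar_nonneg hsym hpsd xs l x⟩
  have hKpos : (gram k xs).PosDef := hK.posDef_iff_isUnit.2 ((isUnit_iff_isUnit_det _).2 hdet)
  rw [hstd, sInf_setOf_pos_eq
    (fun l _ => postVar_le_postVar (by simpa using hKpos) (by simpa using sq_nonneg l) x)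
    (continuousAt_postVar_zero hKpos x).continuousWithinAt]
  simp [postVar]

/-- Monotonicity of the posterior variance in the regularization parameter. -/
theorem postVar_monotone_in_lambda
    {X : Type*} [Nonempty X] (k : X → X → ℝ)
    (hsym : ∀ x y : X, k x y = k y x)
    (hpsd : ∀ (n : ℕ) (xv : Fin n → X) (c : Fin n → ℝ),
      0 ≤ ∑ i, ∑ j, c i * c j * k (xv i) (xv j))
    (t : ℕ) (xs : Fin t → X) (x : X) :
    (∀ l₁ l₂ : ℝ, 0 < l₁ → l₁ ≤ l₂ →
        0 ≤ postVar k xs l₁ x ∧ postVar k xs l₁ x ≤ postVar k xs l₂ x ∧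
          postVar k xs l₂ x ≤ k x x) ∧
      (∀ lam : ℝ, 0 < lam → postStd k xs x ^ 2 ≤ postVar k xs lam x) ∧
      (IsUnit (gram k xs).det →
        postStd k xs x ^ 2 =
            sInf {v : ℝ | ∃ lam : ℝ, 0 < lam ∧ v = postVar k xs lam x} ∧
          postStd k xs x ^ 2 =
            k x x - kvec k xs x ⬝ᵥ ((gram k xs)⁻¹ *ᵥ kvec k xs x)) :=
  postVar_monotone_in_lambda_general k hsym hpsd t xs x
end
end

section
/- General upper bound for the minimum posterior standard deviation: fix any integer T̄ ≥ 2 and let (λ_t)_{t ≥ T̄} be a sequence of strictly positive reals such that γ_t(λ_t²) ≤ (t − 1)/3 for every integer t ≥ T̄. Then for every integer T ≥ T̄ and every sequence x₁, …, x_T ∈ X, min_{t ∈ {1, …, T}} σ(x_t; X_{t−1}) ≤ λ_T, where X_{t−1} = (x₁, …, x_{t−1}). -/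
open Matrix

noncomputable section

/-!
Adding a point `x` to `X_t` borders `K_t + λ² I` by the column `k_t(x)` and the corner
`k(x, x) + λ²`, whose Schur complement is `λ² + σ²_{λ²}(x; X_t)`. Hence
`det (I + λ⁻² K_T) = ∏_t (1 + λ⁻² σ²_{λ²}(x_t; X_{t-1}))`. If every `σ(x_t; X_{t-1})`, and hence
every `σ_{λ²}(x_t; X_{t-1})`, exceeded `λ = λ_T`, each factor would be at least `2`, so
`γ_T(λ²) ≥ (T/2) ln 2 > (T - 1)/3` because `ln 2 > 2/3`.
-/

theorem Matrix.det_succ_eq_det_castSucc_mul_schur {K : Type*} [Field K] {n : ℕ}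
    (M : Matrix (Fin (n + 1)) (Fin (n + 1)) K)
    (hA : IsUnit (M.submatrix Fin.castSucc Fin.castSucc).det) :
    M.det = (M.submatrix Fin.castSucc Fin.castSucc).det *
      (M (Fin.last n) (Fin.last n) - (fun j => M (Fin.last n) j.castSucc) ⬝ᵥ
        ((M.submatrix Fin.castSucc Fin.castSucc)⁻¹ *ᵥ fun i => M i.castSucc (Fin.last n))) := by
  let := invertibleOfIsUnitDet _ hA
  have hlast : finSumFinEquiv (Sum.inr 0 : Fin n ⊕ Fin 1) = Fin.last n := Fin.ext (by simp)
  have hblocks : M.submatrix finSumFinEquiv finSumFinEquiv =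
      fromBlocks (M.submatrix Fin.castSucc Fin.castSucc)
        (replicateCol (Fin 1) fun i => M i.castSucc (Fin.last n))
        (replicateRow (Fin 1) fun j => M (Fin.last n) j.castSucc)
        (of fun _ _ => M (Fin.last n) (Fin.last n)) := by
    ext (i | i) (j | j) <;> simp [Fin.fin_one_eq_zero, hlast] <;> rfl
  rw [← det_submatrix_equiv_self finSumFinEquiv M, hblocks, det_fromBlocks₁₁, det_fin_one,
    invOf_eq_nonsing_inv, ← replicateRow_vecMul, replicateRow_mul_replicateCol, dotProduct_mulVec]
  rfl

def IsPosSemidefKernel_s3 {X : Type*} (k : X → X → ℝ) : Prop :=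
  (∀ x y : X, k x y = k y x) ∧
    ∀ (n : ℕ) (xv : Fin n → X) (c : Fin n → ℝ), 0 ≤ ∑ i, ∑ j, c i * c j * k (xv i) (xv j)

namespace IsPosSemidefKernel_s3

variable {X : Type*} {k : X → X → ℝ}

theorem gram_posSemidef_s3 (hk : IsPosSemidefKernel_s3 k) {n : ℕ} (xs : Fin n → X) :
    (_root_.gram k xs).PosSemidef := by
  refine posSemidef_iff_dotProduct_mulVec.mpr ⟨?_, fun c => ?_⟩
  · ext i j
    exact hk.1 (xs j) (xs i)
  · refine (hk.2 n xs c).trans_eq ?_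
    simp only [dotProduct, mulVec, Finset.mul_sum]
    refine Finset.sum_congr rfl fun i _ => Finset.sum_congr rfl fun j _ => ?_
    simp only [_root_.gram, star_trivial]
    ring

theorem gram_add_sq_smul_one_posDef (hk : IsPosSemidefKernel_s3 k) {n : ℕ} (xs : Fin n → X)
    {l : ℝ} (hl : l ≠ 0) : (_root_.gram k xs + l ^ 2 • (1 : Matrix (Fin n) (Fin n) ℝ)).PosDef :=
  PosDef.posSemidef_add (hk.gram_posSemidef_s3 xs) (PosDef.one.smul (by positivity))

theorem det_gram_add_sq_smul_one_succ (hk : IsPosSemidefKernel_s3 k) {n : ℕ}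
    (xs : Fin (n + 1) → X) {l : ℝ} (hl : l ≠ 0) :
    (_root_.gram k xs + l ^ 2 • (1 : Matrix (Fin (n + 1)) (Fin (n + 1)) ℝ)).det =
      (_root_.gram k (Fin.init xs) + l ^ 2 • (1 : Matrix (Fin n) (Fin n) ℝ)).det *
        (l ^ 2 + postVar k (Fin.init xs) l (xs (Fin.last n))) := by
  have hsub : (_root_.gram k xs + l ^ 2 • (1 : Matrix (Fin (n + 1)) (Fin (n + 1)) ℝ)).submatrix
      Fin.castSucc Fin.castSucc = _root_.gram k (Fin.init xs) + l ^ 2 • 1 := by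
    ext i j
    simp [_root_.gram, Fin.init, one_apply]
  have hrow : (fun j : Fin n =>
      (_root_.gram k xs + l ^ 2 • 1 : Matrix _ _ ℝ) (Fin.last n) j.castSucc) =
        kvec k (Fin.init xs) (xs (Fin.last n)) := by
    ext j
    simp [_root_.gram, kvec, Fin.init, one_apply, (Fin.castSucc_lt_last j).ne',
      hk.1 (xs (Fin.last n))]
  have hcol : (fun i : Fin n =>
      (_root_.gram k xs + l ^ 2 • 1 : Matrix _ _ ℝ) i.castSucc (Fin.last n)) =
        kvec k (Fin.init xs) (xs (Fin.last n)) := by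
    ext i
    simp [_root_.gram, kvec, Fin.init, one_apply, (Fin.castSucc_lt_last i).ne]
  rw [det_succ_eq_det_castSucc_mul_schur _
      (hsub ▸ (hk.gram_add_sq_smul_one_posDef _ hl).det_pos.ne'.isUnit), hsub, hrow, hcol]
  simp only [postVar, Matrix.add_apply, Matrix.smul_apply, one_apply_eq, smul_eq_mul, _root_.gram]
  ring

theorem det_gram_add_sq_smul_one_eq_prod (hk : IsPosSemidefKernel_s3 k) {T : ℕ} (xs : Fin T → X)
    {l : ℝ} (hl : l ≠ 0) :
    (_root_.gram k xs + l ^ 2 • (1 : Matrix (Fin T) (Fin T) ℝ)).det =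
      ∏ t, (l ^ 2 + postVar k (pre xs t) l (xs t)) := by
  induction T with
  | zero => simp
  | succ n ih =>
    rw [hk.det_gram_add_sq_smul_one_succ xs hl, ih, Fin.prod_univ_castSucc]
    rfl

theorem det_one_add_gram_eq_prod (hk : IsPosSemidefKernel_s3 k) {T : ℕ} (xs : Fin T → X)
    {l : ℝ} (hl : l ≠ 0) :
    (1 + (l ^ 2)⁻¹ • _root_.gram k xs).det =
      ∏ t, (1 + (l ^ 2)⁻¹ * postVar k (pre xs t) l (xs t)) := by
  have hl2 : l ^ 2 ≠ 0 := pow_ne_zero 2 hl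
  have hscale :
      1 + (l ^ 2)⁻¹ • _root_.gram k xs = (l ^ 2)⁻¹ • (_root_.gram k xs + l ^ 2 • 1) := by
    rw [smul_add, smul_smul, inv_mul_cancel₀ hl2, one_smul, add_comm]
  rw [hscale, det_smul, hk.det_gram_add_sq_smul_one_eq_prod xs hl, Fintype.card_fin,
    ← Fin.prod_const, ← Finset.prod_mul_distrib]
  simp only [mul_add, inv_mul_cancel₀ hl2]

theorem two_pow_le_det_one_add_gram (hk : IsPosSemidefKernel_s3 k) {T : ℕ} (xs : Fin T → X)
    {l : ℝ} (hl : l ≠ 0) (hvar : ∀ t, l ^ 2 ≤ postVar k (pre xs t) l (xs t)) :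
    2 ^ T ≤ (1 + (l ^ 2)⁻¹ • _root_.gram k xs).det := by
  rw [hk.det_one_add_gram_eq_prod xs hl, ← Fin.prod_const]
  refine Finset.prod_le_prod (fun _ _ => zero_le_two) fun t _ => ?_
  have : 1 ≤ (l ^ 2)⁻¹ * postVar k (pre xs t) l (xs t) :=
    (one_le_inv_mul₀ (by positivity)).mpr (hvar t)
  linarith

end IsPosSemidefKernel_s3

theorem sq_lt_postVar_of_lt_postStd {X ι : Type*} [Fintype ι] [DecidableEq ι]
    {k : X → X → ℝ} {xs : ι → X} {x : X} {l : ℝ} (hl : 0 < l) (h : l < postStd k xs x) :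
    l ^ 2 < postVar k xs l x := by
  have hle : postStd k xs x ≤ Real.sqrt (postVar k xs l x) :=
    ciInf_le ⟨0, by rintro _ ⟨_, rfl⟩; exact Real.sqrt_nonneg _⟩ (⟨l, hl⟩ : {l : ℝ // 0 < l})
  exact (Real.lt_sqrt hl.le).mp (h.trans_le hle)

theorem ofReal_half_log_det_le_mig {X : Type*} (k : X → X → ℝ) {T : ℕ} (xs : Fin T → X)
    (l : ℝ) :
    ENNReal.ofReal (1 / 2 * Real.log (1 + (l ^ 2)⁻¹ • _root_.gram k xs).det) ≤ mig k T l :=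
  le_iSup (fun ys : Fin T → X => ENNReal.ofReal
    (1 / 2 * Real.log (1 + (l ^ 2)⁻¹ • _root_.gram k ys).det)) xs

theorem min_postStd_le_general
    {X : Type*} (k : X → X → ℝ)
    (hsym : ∀ x y : X, k x y = k y x)
    (hpsd : ∀ (n : ℕ) (xv : Fin n → X) (c : Fin n → ℝ),
      0 ≤ ∑ i, ∑ j, c i * c j * k (xv i) (xv j))
    (Tbar : ℕ) (lam : ℕ → ℝ)
    (hlam_pos : ∀ t : ℕ, Tbar ≤ t → 0 < lam t)
    (hmig : ∀ t : ℕ, Tbar ≤ t →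
      mig k t (lam t) ≤ ENNReal.ofReal (((t : ℝ) - 1) / 3)) :
    ∀ T : ℕ, Tbar ≤ T → ∀ xs : Fin T → X,
      sInf (Set.range fun t : Fin T => postStd k (pre xs t) (xs t)) ≤ lam T := by
  intro T hT xs
  by_contra! hlt
  have hl : 0 < lam T := hlam_pos T hT
  have hT1 : (1 : ℝ) ≤ T := by
    rcases T.eq_zero_or_pos with rfl | hpos
    · -- for `T = 0` the infimum is `sInf ∅ = 0`
      rw [Set.range_eq_empty, Real.sInf_empty] at hlt
      linarith
    · exact_mod_cast hpos
  have hvar (t : Fin T) : lam T ^ 2 ≤ postVar k (pre xs t) (lam T) (xs t) :=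
    (sq_lt_postVar_of_lt_postStd hl
      (hlt.trans_le (csInf_le (Set.finite_range _).bddBelow ⟨t, rfl⟩))).le
  have hdet := IsPosSemidefKernel_s3.two_pow_le_det_one_add_gram ⟨hsym, hpsd⟩ xs hl.ne' hvar
  have hlog : T * Real.log 2 ≤ Real.log (1 + (lam T ^ 2)⁻¹ • _root_.gram k xs).det := by
    simpa [Real.log_pow] using Real.log_le_log (by positivity) hdet
  have hgain :
      1 / 2 * Real.log (1 + (lam T ^ 2)⁻¹ • _root_.gram k xs).det ≤ ((T : ℝ) - 1) / 3 :=
    (ENNReal.ofReal_le_ofReal_iff (by linarith)).mp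
      ((ofReal_half_log_det_le_mig k xs _).trans (hmig T hT))
  nlinarith [Real.log_two_gt_d9]

/-- General upper bound for the minimum posterior standard deviation. -/
theorem min_postStd_le
    {X : Type*} [Nonempty X] (k : X → X → ℝ)
    (hsym : ∀ x y : X, k x y = k y x)
    (hpsd : ∀ (n : ℕ) (xv : Fin n → X) (c : Fin n → ℝ),
      0 ≤ ∑ i, ∑ j, c i * c j * k (xv i) (xv j))
    (Tbar : ℕ) (hTbar : 2 ≤ Tbar) (lam : ℕ → ℝ)
    (hlam_pos : ∀ t : ℕ, Tbar ≤ t → 0 < lam t)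
    (hmig : ∀ t : ℕ, Tbar ≤ t →
      mig k t (lam t) ≤ ENNReal.ofReal (((t : ℝ) - 1) / 3)) :
    ∀ T : ℕ, Tbar ≤ T → ∀ xs : Fin T → X,
      sInf (Set.range fun t : Fin T => postStd k (pre xs t) (xs t)) ≤ lam T :=
  min_postStd_le_general k hsym hpsd Tbar lam hlam_pos hmig
end
end

section
/- General upper bound for the cumulative posterior standard deviations: assume k(x, x) ≤ 1 for all x ∈ X. Fix any integer T̄ ≥ 2 and let (λ_t)_{t ≥ T̄} be a sequence of strictly positive reals such that γ_t(λ_t²) ≤ (t − 1)/3 for every integer t ≥ T̄. Then for every T ∈ ℕ₊ and every sequence x₁, …, x_T ∈ X, ∑_{t=1}^T σ(x_t; X_{t−1}) ≤ (T̄ − 1) + ∑_{t=T̄}^T λ_t, where X_{t−1} = (x₁, …, x_{t−1}) and the last sum is empty when T < T̄. -/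
open Matrix

noncomputable section

/-!
Fix `m ≥ T̄`. Among any `m` of the points some `x_t` has `σ(x_t; X_{t-1}) ≤ λ_m`. Otherwise, writing
`w` for these points in their original order, `σ ≤ σ_{λ_m²}` and the fact that conditioning on fewer
points can only increase the posterior variance give `σ²_{λ_m²}(wᵢ; w_{<i}) > λ_m²` for every `i`.
The Schur complement factorisation `det(I + λ⁻² K_w) = ∏ᵢ (1 + σ²_{λ²}(wᵢ; w_{<i}) / λ²)` then
bounds the information gain of `w` below by `(m / 2) log 2 > (m - 1) / 3 ≥ γ_m(λ_m²)`.

Removing such points one at a time from the whole sequence bounds `T - T̄ + 1` of the terms by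
`λ_T, …, λ_{T̄}` and the remaining `T̄ - 1` terms by `k(x, x)^{1/2} ≤ 1`.
-/

open Finset

theorem Matrix.sub_inv_mulVec_dotProduct_mulVec_sub {n R : Type*} [Fintype n] [DecidableEq n]
    [CommRing R] {M : Matrix n n R} (hMt : Mᵀ = M) (hM : IsUnit M.det) (b c : n → R) :
    (c - M⁻¹ *ᵥ b) ⬝ᵥ (M *ᵥ (c - M⁻¹ *ᵥ b)) =
      c ⬝ᵥ (M *ᵥ c) - 2 * (c ⬝ᵥ b) + b ⬝ᵥ (M⁻¹ *ᵥ b) := by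
  have hMb : M *ᵥ (M⁻¹ *ᵥ b) = b := by rw [mulVec_mulVec, mul_nonsing_inv _ hM, one_mulVec]
  have hswap : (M⁻¹ *ᵥ b) ⬝ᵥ (M *ᵥ c) = c ⬝ᵥ b := by
    rw [dotProduct_mulVec, ← mulVec_transpose, hMt, hMb, dotProduct_comm]
  rw [mulVec_sub, hMb, sub_dotProduct, dotProduct_sub, dotProduct_sub, hswap,
    dotProduct_comm b]
  ring

theorem Matrix.extend_dotProduct {ι κ R : Type*} [Fintype ι] [Fintype κ] [CommSemiring R]
    {f : ι → κ} (hf : f.Injective) (c : ι → R) (v : κ → R) :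
    Function.extend f c 0 ⬝ᵥ v = c ⬝ᵥ (v ∘ f) :=
  (Fintype.sum_of_injective f hf _ _
    (fun j hj => by rw [Function.extend_apply' _ _ _ (by simpa using hj), Pi.zero_apply, zero_mul])
    (fun i => by rw [Function.comp_apply, hf.extend_apply])).symm

theorem Matrix.extend_dotProduct_mulVec_extend {ι κ R : Type*} [Fintype ι] [Fintype κ]
    [CommSemiring R] {f : ι → κ} (hf : f.Injective) (M : Matrix κ κ R) (c : ι → R) :
    Function.extend f c 0 ⬝ᵥ (M *ᵥ Function.extend f c 0) = c ⬝ᵥ (M.submatrix f f *ᵥ c) := by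
  rw [extend_dotProduct hf]
  congr 1
  ext i
  simp only [Function.comp_apply, mulVec, dotProduct_comm (M (f i)), extend_dotProduct hf]
  exact dotProduct_comm _ _

structure IsPosSemidefKernel_s4 {X : Type*} (k : X → X → ℝ) : Prop where
  symm : ∀ x y, k x y = k y x
  nonneg : ∀ (n : ℕ) (xv : Fin n → X) (c : Fin n → ℝ),
    0 ≤ ∑ i, ∑ j, c i * c j * k (xv i) (xv j)

section Kernel

variable {X ι κ : Type*} [Fintype ι] [Fintype κ] {k : X → X → ℝ}

theorem gram_posSemidef_s4 (hk : IsPosSemidefKernel_s4 k)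
    (xs : ι → X) : (gram k xs).PosSemidef := by
  refine .of_dotProduct_mulVec_nonneg (funext₂ fun i j => hk.symm (xs j) (xs i)) fun c => ?_
  let e := (Fintype.equivFin ι).symm
  refine (hk.nonneg _ (xs ∘ e) (c ∘ e)).trans_eq ?_
  simp only [Function.comp_apply, star_trivial, dotProduct, mulVec, _root_.gram, mul_sum]
  exact Fintype.sum_equiv e _ _ fun i => Fintype.sum_equiv e _ _ fun j => by ring

variable [DecidableEq ι] [DecidableEq κ]

def regGram (k : X → X → ℝ) (xs : ι → X) (l : ℝ) : Matrix ι ι ℝ := gram k xs + l ^ 2 • 1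

theorem postVar_eq (xs : ι → X) (l : ℝ) (x : X) :
    postVar k xs l x = k x x - kvec k xs x ⬝ᵥ ((regGram k xs l)⁻¹ *ᵥ kvec k xs x) := rfl

theorem regGram_submatrix (ys : κ → X) (l : ℝ) {f : ι → κ} (hf : f.Injective) :
    (regGram k ys l).submatrix f f = regGram k (ys ∘ f) l := by
  rw [regGram, regGram, ← submatrix_one (α := ℝ) f hf]
  rfl

theorem regGram_posDef (hk : IsPosSemidefKernel_s4 k)
    (xs : ι → X) {l : ℝ} (hl : l ≠ 0) : (regGram k xs l).PosDef :=
  PosDef.posSemidef_add (gram_posSemidef_s4 hk xs) (.smul .one (by positivity))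

theorem postVar_le_diag (hk : IsPosSemidefKernel_s4 k)
    (xs : ι → X) {l : ℝ} (hl : l ≠ 0) (x : X) : postVar k xs l x ≤ k x x := by
  have := (regGram_posDef hk xs hl).inv.posSemidef.dotProduct_mulVec_nonneg (kvec k xs x)
  rw [star_trivial] at this
  rw [postVar_eq]
  linarith

theorem postStd_le_sqrt_postVar (xs : ι → X) {l : ℝ} (hl : 0 < l) (x : X) :
    postStd k xs x ≤ √(postVar k xs l x) :=
  ciInf_le ⟨0, by rintro _ ⟨_, rfl⟩; positivity⟩ (⟨l, hl⟩ : {l : ℝ // 0 < l})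

theorem postStd_le_one (hk : IsPosSemidefKernel_s4 k)
    (hk1 : ∀ x : X, k x x ≤ 1) (xs : ι → X) (x : X) : postStd k xs x ≤ 1 :=
  (postStd_le_sqrt_postVar xs one_pos x).trans
    (Real.sqrt_le_one.mpr ((postVar_le_diag hk xs one_ne_zero x).trans (hk1 x)))

/-- The kernel ridge regression loss `‖k(x, ·) - ∑ᵢ cᵢ k(xᵢ, ·)‖² + l² ‖c‖²` in the RKHS of `k`;
the posterior variance `postVar k xs l x` is its minimum. -/
def krrLoss (k : X → X → ℝ) (xs : ι → X) (l : ℝ) (x : X) (c : ι → ℝ) : ℝ :=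
  k x x - 2 * (c ⬝ᵥ kvec k xs x) + c ⬝ᵥ (regGram k xs l *ᵥ c)

theorem krrLoss_eq_postVar_add (hk : IsPosSemidefKernel_s4 k)
    (xs : ι → X) {l : ℝ} (hl : l ≠ 0) (x : X) (c : ι → ℝ) :
    krrLoss k xs l x c = postVar k xs l x +
      (c - (regGram k xs l)⁻¹ *ᵥ kvec k xs x) ⬝ᵥ
        (regGram k xs l *ᵥ (c - (regGram k xs l)⁻¹ *ᵥ kvec k xs x)) := by
  have hM := regGram_posDef hk xs hl
  rw [sub_inv_mulVec_dotProduct_mulVec_sub (by simpa using hM.isHermitian.eq)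
    ((isUnit_iff_isUnit_det _).mp hM.isUnit), krrLoss, postVar_eq]
  ring

theorem postVar_le_krrLoss (hk : IsPosSemidefKernel_s4 k)
    (xs : ι → X) {l : ℝ} (hl : l ≠ 0) (x : X) (c : ι → ℝ) :
    postVar k xs l x ≤ krrLoss k xs l x c := by
  rw [krrLoss_eq_postVar_add hk xs hl]
  simpa using (regGram_posDef hk xs hl).posSemidef.dotProduct_mulVec_nonneg
    (c - (regGram k xs l)⁻¹ *ᵥ kvec k xs x)

theorem krrLoss_inv_mulVec_kvec (hk : IsPosSemidefKernel_s4 k)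
    (xs : ι → X) {l : ℝ} (hl : l ≠ 0) (x : X) :
    krrLoss k xs l x ((regGram k xs l)⁻¹ *ᵥ kvec k xs x) = postVar k xs l x := by
  simp [krrLoss_eq_postVar_add hk xs hl]

theorem krrLoss_extend (ys : κ → X) (l : ℝ) (x : X) {f : ι → κ} (hf : f.Injective)
    (c : ι → ℝ) : krrLoss k ys l x (Function.extend f c 0) = krrLoss k (ys ∘ f) l x c := by
  rw [krrLoss, krrLoss, extend_dotProduct hf, extend_dotProduct_mulVec_extend hf,
    regGram_submatrix ys l hf]
  rfl

theorem postVar_le_postVar_comp (hk : IsPosSemidefKernel_s4 k)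
    (ys : κ → X) {l : ℝ} (hl : l ≠ 0) (x : X) {f : ι → κ} (hf : f.Injective) :
    postVar k ys l x ≤ postVar k (ys ∘ f) l x := by
  set c := (regGram k (ys ∘ f) l)⁻¹ *ᵥ kvec k (ys ∘ f) x
  calc postVar k ys l x ≤ krrLoss k ys l x (Function.extend f c 0) :=
        postVar_le_krrLoss hk ys hl x _
    _ = postVar k (ys ∘ f) l x := by
        rw [krrLoss_extend ys l x hf, krrLoss_inv_mulVec_kvec hk _ hl]

theorem det_regGram_sumElim [Unique κ] (hk : IsPosSemidefKernel_s4 k)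
    (a : ι → X) (b : κ → X) {l : ℝ} (hl : l ≠ 0) :
    (regGram k (Sum.elim a b) l).det =
      (regGram k a l).det * (l ^ 2 + postVar k a l (b default)) := by
  set v := kvec k a (b default)
  have hblocks : regGram k (Sum.elim a b) l = fromBlocks (regGram k a l) (replicateCol κ v)
      (replicateRow κ v) (of fun _ _ => k (b default) (b default) + l ^ 2) := by
    ext (i | i) (j | j) <;>
      simp [regGram, _root_.gram, v, kvec, one_apply, hk.symm (b _), Unique.eq_default]
  have := invertibleOfIsUnitDet _
    ((isUnit_iff_isUnit_det _).mp (regGram_posDef hk a hl).isUnit)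
  rw [hblocks, det_fromBlocks₁₁, det_unique (n := κ), invOf_eq_nonsing_inv, Matrix.mul_assoc,
    ← replicateCol_mulVec, replicateRow_mul_replicateCol, postVar_eq]
  simp only [Matrix.sub_apply, of_apply]
  ring

end Kernel

section Fin

variable {X : Type*} {k : X → X → ℝ}

theorem postVar_pre_le_pre_comp (hk : IsPosSemidefKernel_s4 k)
    {m T : ℕ} (xs : Fin T → X) {g : Fin m → Fin T} (hg : StrictMono g) (i : Fin m)
    {l : ℝ} (hl : l ≠ 0) (x : X) :
    postVar k (pre xs (g i)) l x ≤ postVar k (pre (xs ∘ g) i) l x :=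
  postVar_le_postVar_comp hk (pre xs (g i)) hl x
    (f := fun j : Fin i => ⟨g ⟨j, j.2.trans i.2⟩, hg j.2⟩)
    fun _ _ hab => Fin.ext (Fin.mk.inj (hg.injective (Fin.ext (Fin.mk.inj hab))))

theorem det_regGram_eq_prod (hk : IsPosSemidefKernel_s4 k)
    {p : ℕ} (w : Fin p → X) {l : ℝ} (hl : l ≠ 0) :
    (regGram k w l).det = ∏ i, (l ^ 2 + postVar k (pre w i) l (w i)) := by
  induction p with
  | zero => simp
  | succ p ih =>
    have hw : w ∘ finSumFinEquiv =
        Sum.elim (fun i => w i.castSucc) (fun j : Fin 1 => w (Fin.natAdd p j)) := by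
      ext (i | j) <;> rfl
    rw [← det_submatrix_equiv_self finSumFinEquiv, regGram_submatrix w l finSumFinEquiv.injective,
      hw, det_regGram_sumElim hk _ _ hl, ih, Fin.prod_univ_castSucc]
    rfl

theorem det_one_add_inv_sq_smul_gram (hk : IsPosSemidefKernel_s4 k)
    {p : ℕ} (w : Fin p → X) {l : ℝ} (hl : l ≠ 0) :
    (1 + (l ^ 2)⁻¹ • gram k w).det = ∏ i, (1 + postVar k (pre w i) l (w i) / l ^ 2) := by
  have hl2 : l ^ 2 ≠ 0 := pow_ne_zero 2 hl
  have hscale : 1 + (l ^ 2)⁻¹ • gram k w = (l ^ 2)⁻¹ • regGram k w l := by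
    rw [regGram, smul_add, smul_smul, inv_mul_cancel₀ hl2, one_smul, add_comm]
  rw [hscale, det_smul, det_regGram_eq_prod hk w hl, Fintype.card_fin, ← Fin.prod_const,
    ← prod_mul_distrib]
  refine prod_congr rfl fun i _ => ?_
  field_simp

theorem exists_postStd_le_of_mig_le (hk : IsPosSemidefKernel_s4 k)
    {m T : ℕ} (hm : 0 < m) {l : ℝ} (hl : 0 < l)
    (hmig : mig k m l ≤ ENNReal.ofReal (((m : ℝ) - 1) / 3))
    (xs : Fin T → X) {g : Fin m → Fin T} (hg : StrictMono g) :
    ∃ i, postStd k (pre xs (g i)) (xs (g i)) ≤ l := by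
  by_contra! hlt
  have hvar (i : Fin m) : l ^ 2 < postVar k (pre (xs ∘ g) i) l ((xs ∘ g) i) :=
    ((Real.lt_sqrt hl.le).mp ((hlt i).trans_le (postStd_le_sqrt_postVar _ hl _))).trans_le
      (postVar_pre_le_pre_comp hk xs hg i hl.ne' _)
  have hdet : 2 ^ m ≤ (1 + (l ^ 2)⁻¹ • gram k (xs ∘ g)).det := by
    rw [det_one_add_inv_sq_smul_gram hk _ hl.ne']
    calc (2 : ℝ) ^ m = ∏ _i : Fin m, (2 : ℝ) := by simp
      _ ≤ _ := prod_le_prod (fun _ _ => zero_le_two) fun i _ => by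
        have := (one_lt_div (by positivity)).mpr (hvar i)
        linarith
  have hgain : ((m : ℝ) - 1) / 3 < 1 / 2 * Real.log (1 + (l ^ 2)⁻¹ • gram k (xs ∘ g)).det :=
    calc ((m : ℝ) - 1) / 3 < 1 / 2 * Real.log (2 ^ m) := by
          rw [Real.log_pow]
          nlinarith [Real.log_two_gt_d9]
      _ ≤ _ := by gcongr
  have hle := (le_iSup (fun ys : Fin m → X =>
    ENNReal.ofReal (1 / 2 * Real.log (1 + (l ^ 2)⁻¹ • gram k ys).det)) (xs ∘ g)).trans hmig
  rw [ENNReal.ofReal_le_ofReal_iff'] at hle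
  have hm1 : (1 : ℝ) ≤ m := by exact_mod_cast hm
  rcases hle with h | h <;> linarith

end Fin

theorem sum_le_of_forall_exists_le {ι : Type*} [DecidableEq ι] (s : Finset ι) (σ : ι → ℝ)
    (lam : ℕ → ℝ) (T₀ : ℕ) (hσ : ∀ t ∈ s, σ t ≤ 1)
    (hsmall : ∀ u ⊆ s, T₀ ≤ #u → ∃ t ∈ u, σ t ≤ lam #u) :
    ∑ t ∈ s, σ t ≤ ((T₀ : ℝ) - 1) + ∑ m ∈ Icc T₀ #s, lam m := by
  induction s using Finset.strongInduction with
  | H s ih =>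
    by_cases hs : T₀ ≤ #s
    · obtain ⟨t, ht, hσt⟩ := hsmall s subset_rfl hs
      have hcard : #(s.erase t) + 1 = #s := card_erase_add_one ht
      have hrest := ih (s.erase t) (erase_ssubset ht) (fun u hu => hσ u (mem_of_mem_erase hu))
        fun u hu => hsmall u (hu.trans (erase_subset t s))
      rw [← hcard] at hσt
      rw [← add_sum_erase s σ ht, ← hcard, sum_Icc_succ_top (by omega)]
      linarith
    · have hcard : (#s : ℝ) + 1 ≤ T₀ := by exact_mod_cast (not_le.mp hs)
      rw [Icc_eq_empty (by omega), sum_empty, add_zero]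
      calc ∑ t ∈ s, σ t ≤ ∑ _t ∈ s, (1 : ℝ) := sum_le_sum hσ
        _ = #s := by simp
        _ ≤ T₀ - 1 := by linarith

theorem sum_postStd_le_general
    {X : Type*} (k : X → X → ℝ)
    (hsym : ∀ x y : X, k x y = k y x)
    (hpsd : ∀ (n : ℕ) (xv : Fin n → X) (c : Fin n → ℝ),
      0 ≤ ∑ i, ∑ j, c i * c j * k (xv i) (xv j))
    (hk1 : ∀ x : X, k x x ≤ 1)
    (Tbar : ℕ) (hTbar : 2 ≤ Tbar) (lam : ℕ → ℝ)
    (hlam_pos : ∀ t : ℕ, Tbar ≤ t → 0 < lam t)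
    (hmig : ∀ t : ℕ, Tbar ≤ t →
      mig k t (lam t) ≤ ENNReal.ofReal (((t : ℝ) - 1) / 3)) :
    ∀ T : ℕ, 0 < T → ∀ xs : Fin T → X,
      ∑ t : Fin T, postStd k (pre xs t) (xs t) ≤
        ((Tbar : ℝ) - 1) + ∑ t ∈ Finset.Icc Tbar T, lam t := by
  intro T _ xs
  have hk : IsPosSemidefKernel_s4 k := ⟨hsym, hpsd⟩
  have hsum := sum_le_of_forall_exists_le univ (fun t => postStd k (pre xs t) (xs t)) lam Tbar
    (fun t _ => postStd_le_one hk hk1 _ _) fun u _ hu => by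
      obtain ⟨i, hi⟩ := exists_postStd_le_of_mig_le hk (by omega) (hlam_pos _ hu)
        (hmig _ hu) xs (u.orderEmbOfFin rfl).strictMono
      exact ⟨_, u.orderEmbOfFin_mem rfl i, hi⟩
  rwa [card_univ, Fintype.card_fin] at hsum

/-- General upper bound for the cumulative posterior standard deviations. -/
theorem sum_postStd_le
    {X : Type*} [Nonempty X] (k : X → X → ℝ)
    (hsym : ∀ x y : X, k x y = k y x)
    (hpsd : ∀ (n : ℕ) (xv : Fin n → X) (c : Fin n → ℝ),
      0 ≤ ∑ i, ∑ j, c i * c j * k (xv i) (xv j))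
    (hk1 : ∀ x : X, k x x ≤ 1)
    (Tbar : ℕ) (hTbar : 2 ≤ Tbar) (lam : ℕ → ℝ)
    (hlam_pos : ∀ t : ℕ, Tbar ≤ t → 0 < lam t)
    (hmig : ∀ t : ℕ, Tbar ≤ t →
      mig k t (lam t) ≤ ENNReal.ofReal (((t : ℝ) - 1) / 3)) :
    ∀ T : ℕ, 0 < T → ∀ xs : Fin T → X,
      ∑ t : Fin T, postStd k (pre xs t) (xs t) ≤
        ((Tbar : ℝ) - 1) + ∑ t ∈ Finset.Icc Tbar T, lam t :=
  sum_postStd_le_general k hsym hpsd hk1 Tbar hTbar lam hlam_pos hmig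
end
end

section
/- Deterministic noise-free confidence bound: let f belong to the pre-RKHS of k. Then for every finite sequence X_t = (x₁, …, x_t) in X whose Gram matrix K_t is invertible and every x ∈ X, |f(x) − μ(x; X_t)| ≤ ‖f‖_k · σ(x; X_t); the same bound |f(x)| ≤ ‖f‖_k · k(x, x)^{1/2} holds for the empty sequence. -/
open Matrix

noncomputable section

/-! For `f = ∑ᵢ cᵢ k(xᵢ, ·)`, the error `f(x) - μ(x; X_t)` is the RKHS inner product of `f` with
the residual `r = k(x, ·) - ∑ⱼ aⱼ k(xⱼ, ·)`, `a = K_t⁻¹ k_t(x)`, of projecting `k(x, ·)` onto the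
span of the data. Since `r` vanishes on `X_t`, `‖r‖²_k = r(x) = σ²(x; X_t)`, and the bound is
Cauchy–Schwarz for the semi-inner product of `k`, which positive semidefiniteness gives through
the discriminant of `s ↦ ‖f + s r‖²_k`. -/

/-- The RKHS inner product of `∑ᵢ cᵢ k(xᵢ, ·)` and `∑ⱼ dⱼ k(yⱼ, ·)`. -/
def kernelInner {X : Type*} (k : X → X → ℝ) {m n : ℕ} (xv : Fin m → X) (c : Fin m → ℝ)
    (yv : Fin n → X) (d : Fin n → ℝ) : ℝ :=
  ∑ i, ∑ j, c i * d j * k (xv i) (yv j)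

section Kernel

variable {X : Type*} {k : X → X → ℝ}

theorem kernelInner_comm (hsym : ∀ x y : X, k x y = k y x) {m n : ℕ}
    (xv : Fin m → X) (c : Fin m → ℝ) (yv : Fin n → X) (d : Fin n → ℝ) :
    kernelInner k yv d xv c = kernelInner k xv c yv d := by
  unfold kernelInner
  rw [Finset.sum_comm]
  exact Finset.sum_congr rfl fun i _ => Finset.sum_congr rfl fun j _ => by rw [hsym]; ring

theorem kernelInner_smul_left {m n : ℕ} (s : ℝ)
    (xv : Fin m → X) (c : Fin m → ℝ) (yv : Fin n → X) (d : Fin n → ℝ) :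
    kernelInner k xv (s • c) yv d = s * kernelInner k xv c yv d := by
  simp only [kernelInner, Finset.mul_sum, Pi.smul_apply, smul_eq_mul, mul_assoc]

theorem kernelInner_smul_right {m n : ℕ} (s : ℝ)
    (xv : Fin m → X) (c : Fin m → ℝ) (yv : Fin n → X) (d : Fin n → ℝ) :
    kernelInner k xv c yv (s • d) = s * kernelInner k xv c yv d := by
  simp only [kernelInner, Finset.mul_sum, Pi.smul_apply, smul_eq_mul]
  exact Finset.sum_congr rfl fun i _ => Finset.sum_congr rfl fun j _ => by ring

theorem kernelInner_addCases_left {m m' n : ℕ} (xv : Fin m → X) (c : Fin m → ℝ)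
    (xv' : Fin m' → X) (c' : Fin m' → ℝ) (yv : Fin n → X) (d : Fin n → ℝ) :
    kernelInner k (Fin.addCases xv xv') (Fin.addCases c c') yv d =
      kernelInner k xv c yv d + kernelInner k xv' c' yv d := by
  simp only [kernelInner, Fin.sum_univ_add, Fin.addCases_left, Fin.addCases_right]

theorem kernelInner_addCases_right {m n n' : ℕ} (xv : Fin m → X) (c : Fin m → ℝ)
    (yv : Fin n → X) (d : Fin n → ℝ) (yv' : Fin n' → X) (d' : Fin n' → ℝ) :
    kernelInner k xv c (Fin.addCases yv yv') (Fin.addCases d d') =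
      kernelInner k xv c yv d + kernelInner k xv c yv' d' := by
  simp only [kernelInner, Fin.sum_univ_add, Fin.addCases_left, Fin.addCases_right,
    Finset.sum_add_distrib]

theorem kernelInner_sq_le (hsym : ∀ x y : X, k x y = k y x)
    (hpsd : ∀ (n : ℕ) (xv : Fin n → X) (c : Fin n → ℝ),
      0 ≤ ∑ i, ∑ j, c i * c j * k (xv i) (xv j))
    {m n : ℕ} (xv : Fin m → X) (c : Fin m → ℝ) (yv : Fin n → X) (d : Fin n → ℝ) :
    kernelInner k xv c yv d ^ 2 ≤ kernelInner k xv c xv c * kernelInner k yv d yv d := by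
  have hquad : ∀ s : ℝ, 0 ≤ kernelInner k yv d yv d * (s * s)
      + 2 * kernelInner k xv c yv d * s + kernelInner k xv c xv c := by
    intro s
    have h : 0 ≤ kernelInner k (Fin.addCases xv yv) (Fin.addCases c (s • d))
        (Fin.addCases xv yv) (Fin.addCases c (s • d)) := hpsd _ _ _
    rw [kernelInner_addCases_left, kernelInner_addCases_right, kernelInner_addCases_right,
      kernelInner_smul_left, kernelInner_smul_left, kernelInner_smul_right,
      kernelInner_smul_right, kernelInner_comm hsym xv c yv d] at h
    linarith
  have hdisc := discrim_le_zero hquad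
  rw [discrim] at hdisc
  linarith

theorem kernelInner_eq_sum_mul_apply {f : X → ℝ} {m : ℕ} {xv : Fin m → X} {c : Fin m → ℝ}
    (hf : ∀ x, f x = ∑ i, c i * k (xv i) x) {n : ℕ} (yv : Fin n → X) (d : Fin n → ℝ) :
    kernelInner k xv c yv d = ∑ j, d j * f (yv j) := by
  simp only [kernelInner, hf, Finset.mul_sum]
  rw [Finset.sum_comm]
  exact Finset.sum_congr rfl fun j _ => Finset.sum_congr rfl fun i _ => by ring

theorem abs_sum_mul_apply_le (hsym : ∀ x y : X, k x y = k y x)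
    (hpsd : ∀ (n : ℕ) (xv : Fin n → X) (c : Fin n → ℝ),
      0 ≤ ∑ i, ∑ j, c i * c j * k (xv i) (xv j))
    {f : X → ℝ} {m : ℕ} {xv : Fin m → X} {c : Fin m → ℝ}
    (hf : ∀ x, f x = ∑ i, c i * k (xv i) x) {n : ℕ} (yv : Fin n → X) (d : Fin n → ℝ) :
    |∑ j, d j * f (yv j)| ≤
      √(kernelInner k xv c xv c) * √(kernelInner k yv d yv d) := by
  have hnorm : 0 ≤ kernelInner k xv c xv c := hpsd m xv c
  rw [← kernelInner_eq_sum_mul_apply hf, ← Real.sqrt_mul hnorm]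
  exact Real.abs_le_sqrt (kernelInner_sq_le hsym hpsd xv c yv d)

end Kernel

section Gram

variable {X ι : Type*} [Fintype ι] {k : X → X → ℝ} (xs : ι → X)

theorem gram_isSymm (hsym : ∀ x y : X, k x y = k y x) : (gram k xs).IsSymm :=
  IsSymm.ext fun _ _ => hsym _ _

variable [DecidableEq ι] (x : X)

theorem postMean_eq_dotProduct (hsym : ∀ x y : X, k x y = k y x) (f : X → ℝ) :
    postMean k xs f x = ((gram k xs)⁻¹ *ᵥ kvec k xs x) ⬝ᵥ fun i => f (xs i) := by
  rw [postMean, dotProduct_mulVec, ← mulVec_transpose, (gram_isSymm xs hsym).inv]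

theorem vecMul_gram_inv_mulVec (hsym : ∀ x y : X, k x y = k y x) (hK : IsUnit (gram k xs).det) :
    ((gram k xs)⁻¹ *ᵥ kvec k xs x) ᵥ* gram k xs = kvec k xs x := by
  rw [← mulVec_transpose, (gram_isSymm xs hsym).eq, mulVec_mulVec, mul_nonsing_inv _ hK,
    one_mulVec]

end Gram

section Residual

variable {X : Type*} (k : X → X → ℝ) {t : ℕ} (xs : Fin t → X) (x : X)

/-- Coefficients of the residual `k(x, ·) - ∑ⱼ aⱼ k(xⱼ, ·)`, `a = K_t⁻¹ k_t(x)`, on the points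
`(x₁, …, x_t, x)`. -/
def residualCoeff : Fin (t + 1) → ℝ :=
  Fin.snoc (-((gram k xs)⁻¹ *ᵥ kvec k xs x)) 1

theorem sum_residualCoeff_mul (F : X → ℝ) :
    ∑ j, residualCoeff k xs x j * F ((Fin.snoc xs x : Fin (t + 1) → X) j) =
      F x - ((gram k xs)⁻¹ *ᵥ kvec k xs x) ⬝ᵥ fun i => F (xs i) := by
  simp only [residualCoeff, Fin.sum_univ_castSucc, Fin.snoc_castSucc, Fin.snoc_last,
    Pi.neg_apply, neg_mul, one_mul, Finset.sum_neg_distrib, dotProduct]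
  ring

variable {k}

theorem sum_residualCoeff_mul_kernel_data (hsym : ∀ x y : X, k x y = k y x)
    (hK : IsUnit (gram k xs).det) (j : Fin t) :
    ∑ i, residualCoeff k xs x i * k ((Fin.snoc xs x : Fin (t + 1) → X) i) (xs j) = 0 := by
  rw [sum_residualCoeff_mul k xs x (k · (xs j)), hsym]
  have h := congrFun (vecMul_gram_inv_mulVec xs x hsym hK) j
  rw [vecMul, kvec] at h
  exact sub_eq_zero.2 h.symm

theorem kernelInner_residualCoeff_self (hsym : ∀ x y : X, k x y = k y x)
    (hK : IsUnit (gram k xs).det) :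
    kernelInner k (Fin.snoc xs x) (residualCoeff k xs x) (Fin.snoc xs x) (residualCoeff k xs x) =
      k x x - kvec k xs x ⬝ᵥ ((gram k xs)⁻¹ *ᵥ kvec k xs x) := by
  rw [kernelInner_eq_sum_mul_apply (fun _ => rfl), sum_residualCoeff_mul k xs x
    fun y => ∑ i, residualCoeff k xs x i * k ((Fin.snoc xs x : Fin (t + 1) → X) i) y]
  simp only [sum_residualCoeff_mul_kernel_data xs x hsym hK]
  rw [sum_residualCoeff_mul k xs x (k · x), ← Pi.zero_def, dotProduct_zero, sub_zero,
    dotProduct_comm]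
  rfl

end Residual

theorem noise_free_confidence_bound_general
    {X : Type*} (k : X → X → ℝ)
    (hsym : ∀ x y : X, k x y = k y x)
    (hpsd : ∀ (n : ℕ) (xv : Fin n → X) (c : Fin n → ℝ),
      0 ≤ ∑ i, ∑ j, c i * c j * k (xv i) (xv j))
    (f : X → ℝ) (n : ℕ) (c : Fin n → ℝ) (xv : Fin n → X)
    (hf : ∀ x : X, f x = ∑ i, c i * k (xv i) x) :
    (∀ (t : ℕ) (xs : Fin t → X), IsUnit (gram k xs).det → ∀ x : X,
        |f x - postMean k xs f x| ≤
          Real.sqrt (∑ i, ∑ j, c i * c j * k (xv i) (xv j)) * postStdInv k xs x) ∧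
      ∀ x : X, |f x| ≤
        Real.sqrt (∑ i, ∑ j, c i * c j * k (xv i) (xv j)) * Real.sqrt (k x x) := by
  refine ⟨fun t xs hK x => ?_, fun x => ?_⟩
  · rw [postMean_eq_dotProduct xs x hsym, ← sum_residualCoeff_mul k xs x f, postStdInv,
      ← kernelInner_residualCoeff_self xs x hsym hK]
    exact abs_sum_mul_apply_le hsym hpsd hf _ _
  · simpa [kernelInner] using abs_sum_mul_apply_le hsym hpsd hf (fun _ : Fin 1 => x) 1

/-- Deterministic noise-free confidence bound. -/
theorem noise_free_confidence_bound
    {X : Type*} [Nonempty X] (k : X → X → ℝ)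
    (hsym : ∀ x y : X, k x y = k y x)
    (hpsd : ∀ (n : ℕ) (xv : Fin n → X) (c : Fin n → ℝ),
      0 ≤ ∑ i, ∑ j, c i * c j * k (xv i) (xv j))
    (f : X → ℝ) (n : ℕ) (c : Fin n → ℝ) (xv : Fin n → X)
    (hf : ∀ x : X, f x = ∑ i, c i * k (xv i) x) :
    (∀ (t : ℕ) (xs : Fin t → X), IsUnit (gram k xs).det → ∀ x : X,
        |f x - postMean k xs f x| ≤
          Real.sqrt (∑ i, ∑ j, c i * c j * k (xv i) (xv j)) * postStdInv k xs x) ∧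
      ∀ x : X, |f x| ≤
        Real.sqrt (∑ i, ∑ j, c i * c j * k (xv i) (xv j)) * Real.sqrt (k x x) :=
  noise_free_confidence_bound_general k hsym hpsd f n c xv hf
end
end
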